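/- Let C be a δ-twisted conjugacy class of W and let J be a δ-stable subset of I that is minimal under inclusion among δ-stable subsets J'' with C ∩ W_{J''} ≠ ∅. Let w ∈ C ∩ W_J, let J' ⊆ I be δ-stable, and let x ∈ W. Then x w δ(x)⁻¹ ∈ W_{J'} if and only if x = x' x₁ for some x' ∈ W_{J'} and some x₁ ∈ W^δ ∩ ^{J'}W^J with x₁(J) ⊆ J'. -/

import Mathlib

/-!
Write `x = v x₁ u` with `v ∈ W_{J'}`, `u ∈ W_J` and `x₁` of minimal length in `W_{J'} x W_J`.
Then `w₁ = u w δ(u)⁻¹` still lies in `C ∩ W_J`, and `x₁ w₁ δ(x₁)⁻¹ ∈ W_{J'}` puts `δ(x₁)` in the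
double coset of `x₁`; as `δ` preserves length, `δ(x₁)` is minimal there too, so `δ(x₁) = x₁` by
uniqueness of minimal double coset representatives. Kilmoyer's theorem then gives
`w₁ ∈ W_K` for `K = {j ∈ J | x₁ s_j x₁⁻¹ ∈ S_{J'}}`, which is δ-stable, so `K = J` by
minimality of `J`.

Both facts about minimal representatives rest on the strong exchange condition, obtained from the
action of `W` on `W × ZMod 2` in which `s_i` sends `(t, ε)` to `(s_i t s_i, ε + [t = s_i])`: it
shows that the parity of the number of occurrences of `t` in the right inversion sequence of a
word depends only on the element the word represents.
-/

noncomputable section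

/-- The δ-twisted conjugacy class of `w₀`. -/
def twClass {W : Type} [Group W] (δW : W ≃* W) (w₀ : W) : Set W :=
  {w | ∃ x : W, w = x * w₀ * (δW x)⁻¹}

/-- The standard parabolic subgroup `W_J`. -/
def parab {B W : Type} [Group W] {M : CoxeterMatrix B} (cs : CoxeterSystem M W)
    (J : Set B) : Subgroup W :=
  Subgroup.closure (cs.simple '' J)

/-- `x` is the minimal length element of its double coset `W_{J'} x W_J`,
i.e. `x ∈ {}^{J'}W^{J}`. -/
def IsMinDoubleCoset {B W : Type} [Group W] {M : CoxeterMatrix B}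
    (cs : CoxeterSystem M W) (J' J : Set B) (x : W) : Prop :=
  ∀ a ∈ parab cs J', ∀ b ∈ parab cs J, cs.length x ≤ cs.length (a * x * b)

/-- `x(J) ⊆ J'`: conjugation by `x` carries the simple reflections of `J` to
simple reflections of `J'`. -/
def MapsSimples {B W : Type} [Group W] {M : CoxeterMatrix B}
    (cs : CoxeterSystem M W) (J J' : Set B) (x : W) : Prop :=
  ∀ j ∈ J, ∃ j' ∈ J', x * cs.simple j * x⁻¹ = cs.simple j'

namespace CoxeterSystem

open List

section

variable {B W : Type*} [Group W] {M : CoxeterMatrix B} (cs : CoxeterSystem M W)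

local prefix:100 "s " => cs.simple
local prefix:100 "π " => cs.wordProd
local prefix:100 "ℓ " => cs.length
local prefix:100 "ris " => cs.rightInvSeq
local prefix:100 "lis " => cs.leftInvSeq

theorem rightInvSeq_eq_map_leftInvSeq (ω : List B) :
    ris ω = (lis ω).map (MulAut.conj (π ω)⁻¹) := by
  induction ω with
  | nil => rfl
  | cons i ω ih =>
    simp only [rightInvSeq, leftInvSeq, ih, map_cons, map_map, wordProd_cons, cons.injEq]
    constructor
    · simp [mul_assoc]
    · congr 1
      ext t
      simp [mul_assoc]

theorem prod_map_alternatingWord {G : Type*} [Monoid G] (f : B → G) (i j : B) (p : ℕ) :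
    ((alternatingWord i j (2 * p)).map f).prod = (f i * f j) ^ p := by
  induction p with
  | zero => simp [alternatingWord]
  | succ p ih =>
    rw [Nat.mul_succ, alternatingWord_succ', alternatingWord_succ']
    simp [ih, pow_succ', mul_assoc]

theorem even_count_rightInvSeq_alternatingWord [DecidableEq W] (i j : B) (t : W) :
    Even ((ris (alternatingWord i j (2 * M i j))).count t) := by
  set p := M i j
  have hπ : π (alternatingWord i j (2 * p)) = 1 := by
    simp [prod_alternatingWord_eq_mul_pow, p, simple_mul_simple_pow]
  have hlis : lis (alternatingWord i j (2 * p)) =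
      (range (2 * p)).map fun k ↦ π (alternatingWord j i (2 * k + 1)) :=
    ext_getElem (by simp) fun k hk _ ↦ by
      simp [getElem_leftInvSeq_alternatingWord cs i j p k (by simpa using hk)]
  have hperiodic (k : ℕ) :
      π (alternatingWord j i (2 * (p + k) + 1)) = π (alternatingWord j i (2 * k + 1)) := by
    simp only [prod_alternatingWord_eq_mul_pow, Nat.not_even_bit1, if_false]
    rw [show (2 * (p + k) + 1) / 2 = p + k by omega, show (2 * k + 1) / 2 = k by omega,
      pow_add, simple_mul_simple_pow', one_mul]
  rw [rightInvSeq_eq_map_leftInvSeq, hπ, inv_one, map_one, hlis, two_mul, range_add,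
    map_append, map_map]
  simp only [Function.comp_def, hperiodic]
  simp

section InversionParity

variable [DecidableEq W]

def signFlip (i : B) : Equiv.Perm (W × ZMod 2) :=
  Function.Involutive.toPerm (fun p ↦ (s i * p.1 * s i, p.2 + if p.1 = s i then 1 else 0)) <| by
    rintro ⟨t, ε⟩
    have hconj : s i * t * s i = s i ↔ t = s i := by
      rw [mul_assoc, mul_eq_left, mul_eq_one_iff_eq_inv, inv_simple]
    refine Prod.ext (by simp [mul_assoc]) ?_
    simp only [hconj]
    split_ifs
    · rw [add_assoc, CharTwo.add_self_eq_zero, add_zero]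
    · rw [add_zero, add_zero]

theorem signFlip_apply (i : B) (p : W × ZMod 2) :
    cs.signFlip i p = (s i * p.1 * s i, p.2 + if p.1 = s i then 1 else 0) := rfl

theorem prod_map_signFlip_apply (ω : List B) (p : W × ZMod 2) :
    (ω.map cs.signFlip).prod p = (π ω * p.1 * (π ω)⁻¹, p.2 + (ris ω).count p.1) := by
  induction ω generalizing p with
  | nil => simp
  | cons i ω ih =>
    have hiff : π ω * p.1 * (π ω)⁻¹ = s i ↔ (π ω)⁻¹ * s i * π ω = p.1 := by
      constructor <;> intro h <;> rw [← h] <;> group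
    rw [map_cons, prod_cons, Equiv.Perm.mul_apply, ih, signFlip_apply]
    refine Prod.ext (by simp [wordProd_cons, mul_assoc]) ?_
    simp only [rightInvSeq, count_cons, hiff, beq_iff_eq]
    split_ifs <;> simp [add_assoc]

theorem isLiftable_signFlip : M.IsLiftable cs.signFlip := by
  intro i j
  rw [← prod_map_alternatingWord]
  ext p : 1
  have hπ : π (alternatingWord i j (2 * M i j)) = 1 := by
    simp [prod_alternatingWord_eq_mul_pow, simple_mul_simple_pow]
  rw [prod_map_signFlip_apply, hπ, (ZMod.natCast_eq_zero_iff_even).2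
    (cs.even_count_rightInvSeq_alternatingWord i j p.1)]
  simp

def signRep : W →* Equiv.Perm (W × ZMod 2) := cs.lift ⟨cs.signFlip, cs.isLiftable_signFlip⟩

def inversionParity (w t : W) : ZMod 2 := (cs.signRep w (t, 0)).2

theorem signRep_wordProd_apply (ω : List B) (p : W × ZMod 2) :
    cs.signRep (π ω) p = (π ω * p.1 * (π ω)⁻¹, p.2 + (ris ω).count p.1) := by
  have : cs.signRep (π ω) = (ω.map cs.signFlip).prod := by
    simp [wordProd, map_list_prod, signRep, Function.comp_def]
  rw [this, prod_map_signFlip_apply]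

theorem inversionParity_wordProd (ω : List B) (t : W) :
    cs.inversionParity (π ω) t = (ris ω).count t := by
  simp [inversionParity, signRep_wordProd_apply]

theorem signRep_apply (w : W) (p : W × ZMod 2) :
    cs.signRep w p = (w * p.1 * w⁻¹, p.2 + cs.inversionParity w p.1) := by
  obtain ⟨ω, rfl⟩ := cs.wordProd_surjective w
  rw [signRep_wordProd_apply, inversionParity_wordProd]

theorem inversionParity_mul (w v t : W) :
    cs.inversionParity (w * v) t = cs.inversionParity v t + cs.inversionParity w (v * t * v⁻¹) := by
  show (cs.signRep (w * v) (t, 0)).2 = _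
  rw [map_mul, Equiv.Perm.mul_apply, signRep_apply cs v, signRep_apply cs w, zero_add]

theorem inversionParity_self {t : W} (ht : cs.IsReflection t) : cs.inversionParity t t = 1 := by
  obtain ⟨u, i, rfl⟩ := ht
  set t := u * s i * u⁻¹
  have hone : cs.inversionParity 1 t = 0 := by simpa using cs.inversionParity_wordProd [] t
  have hsimple : cs.inversionParity (s i) (s i) = 1 := by
    simpa using cs.inversionParity_wordProd [i] (s i)
  have hconj : u⁻¹ * t * u⁻¹⁻¹ = s i := by simp [t, mul_assoc]
  have h₁ := cs.inversionParity_mul (u * s i) u⁻¹ t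
  have h₂ := cs.inversionParity_mul u (s i) (s i)
  have h₃ := cs.inversionParity_mul u u⁻¹ t
  rw [hconj] at h₁ h₃
  rw [mul_inv_cancel] at h₃
  rw [simple_mul_simple_self, one_mul, inv_simple] at h₂
  linear_combination h₁ + h₂ - h₃ + hone + hsimple

theorem mem_rightInvSeq_of_inversionParity_eq_one {ω : List B} {t : W}
    (h : cs.inversionParity (π ω) t = 1) : t ∈ ris ω := by
  rw [inversionParity_wordProd, ZMod.natCast_eq_one_iff_odd] at h
  exact count_pos_iff.1 h.pos

theorem inversionParity_eq_one_iff {w t : W} (ht : cs.IsReflection t) :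
    cs.inversionParity w t = 1 ↔ cs.IsRightInversion w t := by
  have hmem (v : W) (h : cs.inversionParity v t = 1) : cs.IsRightInversion v t := by
    obtain ⟨ω, hω, rfl⟩ := cs.exists_isReduced v
    exact cs.isRightInversion_of_mem_rightInvSeq hω (cs.mem_rightInvSeq_of_inversionParity_eq_one h)
  refine ⟨hmem w, fun hwt ↦ ?_⟩
  by_contra h
  have h₀ : cs.inversionParity w t = 0 := by
    by_contra h₀
    exact h (Fin.eq_one_of_ne_zero _ h₀)
  have hwt' : cs.inversionParity (w * t) t = 1 := by
    rw [inversionParity_mul, inversionParity_self cs ht, ht.mul_self, one_mul, ht.inv, h₀,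
      add_zero]
  have := (hmem _ hwt').2
  rw [mul_assoc, ht.mul_self, mul_one] at this
  exact lt_asymm hwt.2 this

theorem exists_eraseIdx_of_inversionParity_eq_one {ω : List B} {t : W}
    (h : cs.inversionParity (π ω) t = 1) : ∃ j < ω.length, π ω * t = π (ω.eraseIdx j) := by
  obtain ⟨j, hj, rfl⟩ := mem_iff_getElem.1 (cs.mem_rightInvSeq_of_inversionParity_eq_one h)
  refine ⟨j, by simpa using hj, ?_⟩
  rw [← getD_eq_getElem _ 1 hj, wordProd_mul_getD_rightInvSeq]

end InversionParity

/-- The strong exchange condition. -/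
theorem exists_eraseIdx_of_isRightInversion (ω : List B) {t : W}
    (h : cs.IsRightInversion (π ω) t) : ∃ j < ω.length, π ω * t = π (ω.eraseIdx j) := by
  classical
  exact cs.exists_eraseIdx_of_inversionParity_eq_one ((cs.inversionParity_eq_one_iff h.1).2 h)

theorem exists_eraseIdx_of_isRightInversion_mul (ω : List B) {b t : W}
    (h : cs.IsRightInversion (π ω * b) t) (hb : ¬cs.IsRightInversion b t) :
    ∃ j < ω.length, π ω * b * t = π (ω.eraseIdx j) * b := by
  classical
  have hb₀ : cs.inversionParity b t = 0 := by
    by_contra h₀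
    exact hb ((cs.inversionParity_eq_one_iff h.1).1 (Fin.eq_one_of_ne_zero _ h₀))
  have hω : cs.inversionParity (π ω) (b * t * b⁻¹) = 1 := by
    have := (cs.inversionParity_eq_one_iff h.1).2 h
    rwa [inversionParity_mul, hb₀, zero_add] at this
  obtain ⟨j, hj, heq⟩ := cs.exists_eraseIdx_of_inversionParity_eq_one hω
  exact ⟨j, hj, by rw [← heq]; group⟩

theorem exists_isReduced_sublist (ω : List B) :
    ∃ ω', ω'.Sublist ω ∧ cs.IsReduced ω' ∧ π ω' = π ω := by
  induction ω using List.reverseRecOn with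
  | nil => exact ⟨[], .slnil, by simp [IsReduced], rfl⟩
  | append_singleton ω i ih =>
    obtain ⟨ρ, hsub, hred, hπ⟩ := ih
    have hπi : π (ω ++ [i]) = π ρ * s i := by rw [wordProd_append, hπ, wordProd_singleton]
    rcases cs.length_mul_simple (π ρ) i with hup | hdown
    · refine ⟨ρ ++ [i], hsub.append (.refl _), ?_, by rw [hπi, wordProd_append, wordProd_singleton]⟩
      rw [IsReduced, wordProd_append, wordProd_singleton, hup, hred, length_append,
        length_singleton]
    · obtain ⟨j, hj, heq⟩ :=
        cs.exists_eraseIdx_of_isRightInversion ρ ⟨cs.isReflection_simple i, by omega⟩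
      refine ⟨ρ.eraseIdx j, (eraseIdx_sublist ρ j).trans (hsub.trans (sublist_append_left ω [i])),
        ?_, by rw [hπi, heq]⟩
      have := length_eraseIdx_add_one hj
      rw [IsReduced, ← heq]
      rw [IsReduced] at hred
      omega

theorem length_map_le {f : W →* W} {σ : B → B} (hf : ∀ i, f (s i) = s (σ i)) (w : W) :
    ℓ (f w) ≤ ℓ w := by
  obtain ⟨ω, hω, rfl⟩ := cs.exists_isReduced w
  have hπ : f (π ω) = π (ω.map σ) := by simp [wordProd, map_list_prod, hf, Function.comp_def]
  calc ℓ (f (π ω)) ≤ (ω.map σ).length := hπ ▸ cs.length_wordProd_le _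
    _ = ℓ (π ω) := by rw [List.length_map, hω]

theorem length_map {f : W ≃* W} {σ : Equiv.Perm B} (hf : ∀ i, f (s i) = s (σ i)) (w : W) :
    ℓ (f w) = ℓ w := by
  have hsymm (i : B) : f.symm (s i) = s (σ.symm i) :=
    f.symm_apply_eq.2 (by rw [hf, σ.apply_symm_apply])
  refine le_antisymm (cs.length_map_le (f := f.toMonoidHom) hf w) ?_
  simpa using cs.length_map_le (f := f.symm.toMonoidHom) hsymm (f w)

theorem image_setOf_conj_simple_subset {f : W →* W} {σ : B → B}
    (hf : ∀ i, f (s i) = s (σ i)) {J J' : Set B} {x : W} (hx : f x = x) (hJ : σ '' J ⊆ J)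
    (hJ' : σ '' J' ⊆ J') :
    σ '' {j | j ∈ J ∧ ∃ j' ∈ J', x * s j * x⁻¹ = s j'} ⊆
      {j | j ∈ J ∧ ∃ j' ∈ J', x * s j * x⁻¹ = s j'} := by
  rintro _ ⟨j, ⟨hj, j', hj', h⟩, rfl⟩
  refine ⟨hJ ⟨j, hj, rfl⟩, σ j', hJ' ⟨j', hj', rfl⟩, ?_⟩
  calc x * s (σ j) * x⁻¹ = f (x * s j * x⁻¹) := by rw [map_mul, map_mul, map_inv, hf, hx]
    _ = s (σ j') := by rw [h, hf]

end

section Parabolic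

variable {B W : Type} [Group W] {M : CoxeterMatrix B} (cs : CoxeterSystem M W) {J : Set B}

local prefix:100 "s " => cs.simple
local prefix:100 "π " => cs.wordProd
local prefix:100 "ℓ " => cs.length

theorem simple_mem_parab {j : B} (hj : j ∈ J) : s j ∈ parab cs J :=
  Subgroup.subset_closure ⟨j, hj, rfl⟩

theorem mem_parab_iff {w : W} : w ∈ parab cs J ↔ ∃ ω : List B, (∀ i ∈ ω, i ∈ J) ∧ π ω = w := by
  refine ⟨fun hw ↦ ?_, ?_⟩
  · induction hw using Subgroup.closure_induction with
    | mem _ h =>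
      obtain ⟨j, hj, rfl⟩ := h
      exact ⟨[j], by simpa using hj, by simp⟩
    | one => exact ⟨[], by simp, rfl⟩
    | mul _ _ _ _ ha hb =>
      obtain ⟨ωa, ha, rfl⟩ := ha
      obtain ⟨ωb, hb, rfl⟩ := hb
      exact ⟨ωa ++ ωb, by simpa [or_imp, forall_and] using ⟨ha, hb⟩, wordProd_append ..⟩
    | inv _ _ ha =>
      obtain ⟨ω, hω, rfl⟩ := ha
      exact ⟨ω.reverse, by simpa using hω, by simp⟩
  · rintro ⟨ω, hω, rfl⟩
    exact list_prod_mem (by simpa using fun i hi ↦ cs.simple_mem_parab (hω i hi))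

theorem exists_isReduced_of_mem_parab {w : W} (hw : w ∈ parab cs J) :
    ∃ ω, cs.IsReduced ω ∧ (∀ i ∈ ω, i ∈ J) ∧ π ω = w := by
  obtain ⟨ω, hJ, rfl⟩ := cs.mem_parab_iff.1 hw
  obtain ⟨ω', hsub, hred, hπ⟩ := cs.exists_isReduced_sublist ω
  exact ⟨ω', hred, fun i hi ↦ hJ i (hsub.subset hi), hπ⟩

theorem exists_mul_simple_mem_parab {w : W} (hw : w ∈ parab cs J) (hne : w ≠ 1) :
    ∃ j ∈ J, w * s j ∈ parab cs J ∧ ℓ (w * s j) + 1 = ℓ w := by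
  obtain ⟨ω, hred, hJ, rfl⟩ := cs.exists_isReduced_of_mem_parab hw
  obtain ⟨ω, j, rfl⟩ := ω.eq_nil_or_concat'.resolve_left (by rintro rfl; exact hne rfl)
  have hπ : π (ω ++ [j]) * s j = π ω := by
    rw [wordProd_append, wordProd_singleton, simple_mul_simple_cancel_right]
  have hredω : cs.IsReduced ω := by simpa using hred.take ω.length
  refine ⟨j, hJ j (by simp), hπ ▸ cs.mem_parab_iff.2 ⟨ω, fun i hi ↦ hJ i (by simp [hi]), rfl⟩, ?_⟩
  rw [hπ, hredω, hred, length_append, length_singleton]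

theorem exists_eq_simple_of_mem_parab {w : W} (hw : w ∈ parab cs J) (h : ℓ w = 1) :
    ∃ j ∈ J, w = s j := by
  obtain ⟨ω, hred, hJ, rfl⟩ := cs.exists_isReduced_of_mem_parab hw
  obtain ⟨j, rfl⟩ := List.length_eq_one_iff.1 (hred ▸ h)
  exact ⟨j, hJ j (by simp), by simp⟩

theorem map_parab {f : W →* W} {σ : B → B} (hf : ∀ i, f (s i) = s (σ i)) (J : Set B) :
    (parab cs J).map f = parab cs (σ '' J) := by
  rw [parab, parab, MonoidHom.map_closure, Set.image_image, Set.image_image]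
  simp only [hf]

theorem map_mem_parab_iff {f : W ≃* W} {σ : B → B} (hf : ∀ i, f (s i) = s (σ i))
    (hJ : σ '' J = J) {w : W} : f w ∈ parab cs J ↔ w ∈ parab cs J := by
  have h := cs.map_parab (f := f.toMonoidHom) hf J
  rw [hJ] at h
  calc f w ∈ parab cs J ↔ f.toMonoidHom w ∈ (parab cs J).map f.toMonoidHom := by rw [h]; rfl
    _ ↔ w ∈ parab cs J := Subgroup.mem_map_iff_mem f.injective

theorem length_mul_of_forall_length_le {x : W} (hx : ∀ u ∈ parab cs J, ℓ x ≤ ℓ (x * u))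
    {u : W} (hu : u ∈ parab cs J) : ℓ (x * u) = ℓ x + ℓ u := by
  induction hn : ℓ u using Nat.strong_induction_on generalizing u with
  | _ n ih =>
  subst hn
  by_cases hu₁ : u = 1
  · simp [hu₁]
  obtain ⟨j, hj, hu', hlen⟩ := cs.exists_mul_simple_mem_parab hu hu₁
  have ih' := ih _ (by omega) hu' rfl
  have hxu : x * u = x * (u * s j) * s j := by simp [mul_assoc]
  rcases cs.length_mul_simple (x * (u * s j)) j with hup | hdown
  · rw [hxu, hup, ih']
    omega
  obtain ⟨ω, hω, rfl⟩ := cs.exists_isReduced x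
  obtain ⟨m, hm, heq⟩ := cs.exists_eraseIdx_of_isRightInversion_mul ω (b := u * s j)
    ⟨cs.isReflection_simple j, by omega⟩ fun h ↦ by
      have := h.2
      rw [simple_mul_simple_cancel_right] at this
      omega
  have hconj : (u * s j) * s j * (u * s j)⁻¹ ∈ parab cs J :=
    mul_mem (mul_mem hu' (cs.simple_mem_parab hj)) (inv_mem hu')
  have hdel : π ω * ((u * s j) * s j * (u * s j)⁻¹) = π (ω.eraseIdx m) :=
    calc π ω * ((u * s j) * s j * (u * s j)⁻¹) = π ω * (u * s j) * s j * (u * s j)⁻¹ := by group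
      _ = π (ω.eraseIdx m) := by rw [heq, mul_inv_cancel_right]
  have hshort := hx _ hconj
  rw [hdel] at hshort
  have := cs.length_wordProd_le (ω.eraseIdx m)
  have := length_eraseIdx_add_one hm
  rw [hω] at hshort
  omega

theorem mul_simple_mul_inv_mem_parab {J' : Set B} {v y : W} {j : B} (hv : v ∈ parab cs J')
    (hy : ℓ y < ℓ (y * s j)) (h : ℓ (v * y * s j) < ℓ (v * y)) : y * s j * y⁻¹ ∈ parab cs J' := by
  obtain ⟨ω, hω, rfl⟩ := cs.mem_parab_iff.1 hv
  obtain ⟨m, -, heq⟩ := cs.exists_eraseIdx_of_isRightInversion_mul ω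
    ⟨cs.isReflection_simple j, h⟩ fun h' ↦ lt_asymm hy h'.2
  have hconj : y * s j * y⁻¹ = (π ω)⁻¹ * π (ω.eraseIdx m) :=
    calc y * s j * y⁻¹ = (π ω)⁻¹ * (π ω * y * s j) * y⁻¹ := by group
      _ = (π ω)⁻¹ * π (ω.eraseIdx m) := by rw [heq]; group
  rw [hconj]
  exact mul_mem (inv_mem hv)
    (cs.mem_parab_iff.2 ⟨_, fun i hi ↦ hω i ((eraseIdx_sublist _ _).subset hi), rfl⟩)

theorem _root_.IsMinDoubleCoset.exists_eq_mul_mul (J' J : Set B) (x : W) :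
    ∃ x₁, IsMinDoubleCoset cs J' J x₁ ∧ ∃ v ∈ parab cs J', ∃ u ∈ parab cs J,
      x = v * x₁ * u := by
  obtain ⟨_, ⟨a, ha, b, hb, rfl⟩, hmin⟩ := exists_minimalFor_of_wellFoundedLT
    (fun y ↦ ∃ a ∈ parab cs J', ∃ b ∈ parab cs J, y = a * x * b) cs.length
    ⟨x, 1, one_mem _, 1, one_mem _, by simp⟩
  refine ⟨a * x * b, fun a' ha' b' hb' ↦ ?_, a⁻¹, inv_mem ha, b⁻¹, inv_mem hb, by group⟩
  exact le_of_not_gt fun hlt ↦ hlt.not_ge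
    (hmin ⟨a' * a, mul_mem ha' ha, b * b', mul_mem hb hb', by group⟩ hlt.le)

variable {cs} {J' : Set B} {x : W}

theorem _root_.IsMinDoubleCoset.length_mul_right (hx : IsMinDoubleCoset cs J' J x) {u : W}
    (hu : u ∈ parab cs J) : ℓ (x * u) = ℓ x + ℓ u :=
  cs.length_mul_of_forall_length_le (fun u hu ↦ by simpa using hx 1 (one_mem _) u hu) hu

theorem _root_.IsMinDoubleCoset.length_mul_left (hx : IsMinDoubleCoset cs J' J x) {v : W}
    (hv : v ∈ parab cs J') : ℓ (v * x) = ℓ v + ℓ x := by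
  have hinv : ∀ u ∈ parab cs J', ℓ x⁻¹ ≤ ℓ (x⁻¹ * u) := fun u hu ↦ by
    simpa [← cs.length_inv (x⁻¹ * u)] using hx u⁻¹ (inv_mem hu) 1 (one_mem _)
  rw [← cs.length_inv, mul_inv_rev, cs.length_mul_of_forall_length_le hinv (inv_mem hv),
    cs.length_inv, cs.length_inv, add_comm]

theorem _root_.IsMinDoubleCoset.length_lt_length_mul_simple (hx : IsMinDoubleCoset cs J' J x)
    {j : B} (hj : j ∈ J) : ℓ x < ℓ (x * s j) := by
  rw [hx.length_mul_right (cs.simple_mem_parab hj), length_simple]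
  omega

theorem _root_.IsMinDoubleCoset.eq_of_eq_mul_mul {y : W} (hx : IsMinDoubleCoset cs J' J x)
    (hy : IsMinDoubleCoset cs J' J y) {v u : W} (hv : v ∈ parab cs J') (hu : u ∈ parab cs J)
    (h : y = v * x * u) : y = x := by
  induction hn : ℓ u using Nat.strong_induction_on generalizing v u with
  | _ n ih =>
  subst hn
  by_cases hu₁ : u = 1
  · subst hu₁
    have hlen : ℓ y = ℓ v + ℓ x := by rw [h, mul_one, hx.length_mul_left hv]
    have hle : ℓ y ≤ ℓ x := by simpa [h] using hy v⁻¹ (inv_mem hv) 1 (one_mem _)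
    have hv₁ : v = 1 := cs.length_eq_zero_iff.1 (by omega)
    simp [h, hv₁]
  obtain ⟨j, hj, hu', hlen⟩ := cs.exists_mul_simple_mem_parab hu hu₁
  have hr : y * s j * y⁻¹ ∈ parab cs J' := by
    refine cs.mul_simple_mul_inv_mem_parab (inv_mem hv) (hy.length_lt_length_mul_simple hj) ?_
    rw [show v⁻¹ * y = x * u by rw [h]; group, mul_assoc, hx.length_mul_right hu,
      hx.length_mul_right hu']
    omega
  refine ih _ (by omega) (mul_mem (inv_mem hr) hv) hu' ?_ rfl
  calc y = (y * s j * y⁻¹)⁻¹ * y * s j := by group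
    _ = (y * s j * y⁻¹)⁻¹ * v * x * (u * s j) := by rw [h]; group

/-- Kilmoyer's theorem. -/
theorem _root_.IsMinDoubleCoset.mem_parab_of_mul_mul_inv_mem (hx : IsMinDoubleCoset cs J' J x)
    {u : W} (hu : u ∈ parab cs J) (h : x * u * x⁻¹ ∈ parab cs J') :
    u ∈ parab cs {j | j ∈ J ∧ ∃ j' ∈ J', x * s j * x⁻¹ = s j'} := by
  induction hn : ℓ u using Nat.strong_induction_on generalizing u with
  | _ n ih =>
  subst hn
  by_cases hu₁ : u = 1
  · simp [hu₁, one_mem]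
  obtain ⟨j, hj, hu', hlen⟩ := cs.exists_mul_simple_mem_parab hu hu₁
  have hr : x * s j * x⁻¹ ∈ parab cs J' := by
    refine cs.mul_simple_mul_inv_mem_parab h (hx.length_lt_length_mul_simple hj) ?_
    rw [inv_mul_cancel_right, mul_assoc, hx.length_mul_right hu, hx.length_mul_right hu']
    omega
  obtain ⟨j', hj', hjj'⟩ : ∃ j' ∈ J', x * s j * x⁻¹ = s j' := by
    refine cs.exists_eq_simple_of_mem_parab hr ?_
    have := hx.length_mul_left hr
    rw [inv_mul_cancel_right, hx.length_mul_right (cs.simple_mem_parab hj), length_simple] at this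
    omega
  have hu's : x * (u * s j) * x⁻¹ ∈ parab cs J' := by
    rw [show x * (u * s j) * x⁻¹ = x * u * x⁻¹ * (x * s j * x⁻¹) by group]
    exact mul_mem h hr
  simpa using mul_mem (ih _ (by omega) hu' hu's rfl) (cs.simple_mem_parab ⟨hj, j', hj', hjj'⟩)

theorem _root_.IsMinDoubleCoset.map {f : W ≃* W} {σ : Equiv.Perm B}
    (hf : ∀ i, f (s i) = s (σ i)) (hJ' : σ '' J' = J') (hJ : σ '' J = J)
    (hx : IsMinDoubleCoset cs J' J x) : IsMinDoubleCoset cs J' J (f x) := by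
  intro a ha b hb
  rw [show a * f x * b = f (f.symm a * x * f.symm b) by simp, cs.length_map hf, cs.length_map hf]
  exact hx _ ((cs.map_mem_parab_iff hf hJ').1 (by simpa using ha)) _
    ((cs.map_mem_parab_iff hf hJ).1 (by simpa using hb))

theorem _root_.MapsSimples.mul_mul_inv_mem_parab (hx : MapsSimples cs J J' x) {u : W}
    (hu : u ∈ parab cs J) : x * u * x⁻¹ ∈ parab cs J' := by
  have hle : (parab cs J).map (MulAut.conj x).toMonoidHom ≤ parab cs J' := by
    rw [parab, MonoidHom.map_closure, Subgroup.closure_le]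
    rintro _ ⟨_, ⟨j, hj, rfl⟩, rfl⟩
    obtain ⟨j', hj', h⟩ := hx j hj
    simpa [h] using cs.simple_mem_parab hj'
  exact hle ⟨u, hu, rfl⟩

theorem mul_mul_inv_map_mem_parab {f : W ≃* W} {σ : B → B} (hf : ∀ i, f (s i) = s (σ i))
    (hJ : σ '' J = J) {v g : W} (hv : v ∈ parab cs J) (hg : g ∈ parab cs J) :
    v * g * (f v)⁻¹ ∈ parab cs J :=
  mul_mem (mul_mem hv hg) (inv_mem ((cs.map_mem_parab_iff hf hJ).2 hv))

theorem mapsSimples_of_minimal [Finite B] {f : W →* W} {σ : Equiv.Perm B}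
    (hf : ∀ i, f (s i) = s (σ i)) {J' : Set B} {x w : W} (hx : f x = x) (hJ : σ '' J = J)
    (hJ' : σ '' J' = J') (hw : w ∈ parab cs {j | j ∈ J ∧ ∃ j' ∈ J', x * s j * x⁻¹ = s j'})
    (hmin : ∀ K : Set B, σ '' K = K → w ∈ parab cs K → ¬K ⊂ J) : MapsSimples cs J J' x := by
  set K := {j | j ∈ J ∧ ∃ j' ∈ J', x * s j * x⁻¹ = s j'}
  have hK : σ '' K = K := Set.eq_of_subset_of_ncard_le
    (cs.image_setOf_conj_simple_subset hf hx hJ.subset hJ'.subset)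
    (Set.ncard_image_of_injective _ σ.injective).ge
  have hKJ : K = J := by
    by_contra hne
    exact hmin K hK hw (ssubset_of_subset_of_ne (fun j hj ↦ hj.1) hne)
  exact fun j hj ↦ (hKJ.symm ▸ hj : j ∈ K).2

end Parabolic

end CoxeterSystem

theorem mul_mul_inv_mem_twClass {W : Type} [Group W] {δW : W ≃* W} {w₀ w : W}
    (hw : w ∈ twClass δW w₀) (u : W) : u * w * (δW u)⁻¹ ∈ twClass δW w₀ := by
  obtain ⟨g, rfl⟩ := hw
  exact ⟨u * g, by rw [map_mul, mul_inv_rev]; group⟩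

theorem statement18_general
    (B : Type) [Fintype B]
    (W : Type) [Group W]
    (M : CoxeterMatrix B) (cs : CoxeterSystem M W)
    (δI : Equiv.Perm B) (δW : W ≃* W)
    (hδ : ∀ i : B, δW (cs.simple i) = cs.simple (δI i))
    (w₀ : W)
    (J : Set B) (hJ : δI '' J = J)
    (hJmin : ∀ J'' : Set B, δI '' J'' = J'' →
      (twClass δW w₀ ∩ (parab cs J'' : Set W)).Nonempty → ¬ J'' ⊂ J)
    (w : W) (hw : w ∈ twClass δW w₀ ∩ (parab cs J : Set W))
    (J' : Set B) (hJ' : δI '' J' = J')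
    (x : W) :
    x * w * (δW x)⁻¹ ∈ parab cs J' ↔
      ∃ x' ∈ parab cs J', ∃ x₁ : W,
        δW x₁ = x₁ ∧ IsMinDoubleCoset cs J' J x₁ ∧ MapsSimples cs J J' x₁ ∧
        x = x' * x₁ := by
  constructor
  · intro hx
    obtain ⟨x₁, hmin, v, hv, u, hu, rfl⟩ := IsMinDoubleCoset.exists_eq_mul_mul cs J' J x
    set w₁ := u * w * (δW u)⁻¹
    have hw₁ : w₁ ∈ parab cs J := cs.mul_mul_inv_map_mem_parab hδ hJ hu hw.2
    have hc : x₁ * w₁ * (δW x₁)⁻¹ ∈ parab cs J' := by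
      convert cs.mul_mul_inv_map_mem_parab hδ hJ' (inv_mem hv) hx using 1
      simp only [w₁, map_mul, map_inv]
      group
    have hfix : δW x₁ = x₁ :=
      hmin.eq_of_eq_mul_mul (hmin.map hδ hJ' hJ) (inv_mem hc) hw₁ (by group)
    rw [hfix] at hc
    have hms : MapsSimples cs J J' x₁ :=
      cs.mapsSimples_of_minimal (f := δW.toMonoidHom) hδ hfix hJ hJ'
        (hmin.mem_parab_of_mul_mul_inv_mem hw₁ hc)
        fun K hK hw₁K ↦ hJmin K hK ⟨w₁, mul_mul_inv_mem_twClass hw.1 u, hw₁K⟩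
    exact ⟨v * (x₁ * u * x₁⁻¹), mul_mem hv (hms.mul_mul_inv_mem_parab hu), x₁, hfix, hmin, hms,
      by group⟩
  · rintro ⟨x', hx', x₁, hfix, -, hms, rfl⟩
    rw [show x' * x₁ * w * (δW (x' * x₁))⁻¹ = x' * (x₁ * w * x₁⁻¹) * (δW x')⁻¹ by
      rw [map_mul, hfix]; group]
    exact cs.mul_mul_inv_map_mem_parab hδ hJ' hx' (hms.mul_mul_inv_mem_parab hw.2)

theorem statement18
    (B : Type) [DecidableEq B] [Fintype B]
    (W : Type) [Group W] [Fintype W]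
    (M : CoxeterMatrix B) (cs : CoxeterSystem M W)
    (hirr : ∀ J : Set B, (∀ i ∈ J, ∀ j ∉ J, M i j = 2) → J = ∅ ∨ J = Set.univ)
    (δI : Equiv.Perm B) (δW : W ≃* W)
    (hδ : ∀ i : B, δW (cs.simple i) = cs.simple (δI i))
    (w₀ : W)
    (J : Set B) (hJ : δI '' J = J)
    (hJmeets : (twClass δW w₀ ∩ (parab cs J : Set W)).Nonempty)
    (hJmin : ∀ J'' : Set B, δI '' J'' = J'' →
      (twClass δW w₀ ∩ (parab cs J'' : Set W)).Nonempty → ¬ J'' ⊂ J)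
    (w : W) (hw : w ∈ twClass δW w₀ ∩ (parab cs J : Set W))
    (J' : Set B) (hJ' : δI '' J' = J')
    (x : W) :
    x * w * (δW x)⁻¹ ∈ parab cs J' ↔
      ∃ x' ∈ parab cs J', ∃ x₁ : W,
        δW x₁ = x₁ ∧ IsMinDoubleCoset cs J' J x₁ ∧ MapsSimples cs J J' x₁ ∧
        x = x' * x₁ :=
  statement18_general B W M cs δI δW hδ w₀ J hJ hJmin w hw J' hJ' x

end
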